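/- arXiv:1207.5467 — 5 statements merged into one kernel-verified Lean document; each statement's English description precedes it below -/
import Mathlib

section
/- Fix integers n ≥ 2 and r ≥ n, and an (n−1)-element subset I = {i_1 < … < i_{n−1}} of [r] = {1,…,r}; write the complement [r] \ I = {d_0 < d_1 < … < d_{r−n}}. Then for all integers 0 ≤ p ≤ r−n and 1 ≤ q ≤ n: if q = d_p − p, then (r−n)! · (∏_{α=1}^{q−1} (p+q−i_α)_+ · ∏_{α=q}^{n−1} (i_α−p−q)_+) / ((p+q−1)! · (r−p−q)!) = (r−n)! · ∏_{ℓ∈{0,…,r−n}, ℓ≠p} 1/|d_ℓ − d_p|; and if q ≠ d_p − p, then (r−n)! · (∏_{α=1}^{q−1} (p+q−i_α)_+ · ∏_{α=q}^{n−1} (i_α−p−q)_+) / ((p+q−1)! · (r−p−q)!) = 0. -/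
open MeasureTheory Filter

noncomputable section

/-- `σ_b(a)`: sum over all `b`-element subsets `J` of `{1,…,a}` of the product of elements. -/
def sigmaFn (b a : ℕ) : ℕ := ∑ J ∈ (Finset.Icc 1 a).powersetCard b, ∏ j ∈ J, j

/-- the `(α+1)`-st smallest element of a finite set of naturals (0-indexed). -/
def nthElt (I : Finset ℕ) (α : ℕ) : ℕ := (I.sort (· ≤ ·)).getD α 0

/-- the product `∏_{α=1}^{q−1} (p+q−i_α)_+ · ∏_{α=q}^{n−1} (i_α−p−q)_+`. -/
def pureNum (n p q : ℕ) (I : Finset ℕ) : ℤ :=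
  ∏ α ∈ Finset.range (n - 1),
    if α + 1 < q then max ((p : ℤ) + q - nthElt I α) 0
    else max ((nthElt I α : ℤ) - p - q) 0

/-- the entry `k_{p,q}(π(r,I))` of the pure diagram `π(r,I)`. -/
def kPure (n r p q : ℕ) (I : Finset ℕ) : ℝ :=
  ((r - n).factorial : ℝ) * (pureNum n p q I : ℝ) /
    (((p + q - 1).factorial : ℝ) * ((r - p - q).factorial : ℝ))

/-- `μ_{q,n}(r,p)`. -/
def muFn (n q r p : ℕ) : ℝ :=
  (1 / 2 ^ n) * ((p : ℝ) ^ (q - 1) * ((r : ℝ) - p - n) ^ (n - q)) /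
    ((q - 1).factorial * (n - q).factorial)

/-!
Write `s = p + q`. Each factor `(s - i_α)_+` (for `α < q`) or `(i_α - s)_+` (for `α ≥ q`) of the
numerator is nonzero exactly when `i_α` lies on the prescribed side of `s`, so the numerator
vanishes unless `s ∉ I` and exactly `q - 1` elements of `I` are smaller than `s`. Since
`[1, s)` is split between `I` and its complement `D`, this happens iff `s` has exactly `p`
smaller elements in `D`, i.e. `s = d_p`. In that case the numerator is `∏_{i ∈ I} |i - s|`, and
multiplying it by `∏_{d ∈ D, d ≠ s} |d - s|` gives `∏_{x ∈ [r], x ≠ s} |x - s| = (s-1)! (r-s)!`,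
which is the denominator.
-/

open Finset
open scoped Nat

lemma nthElt_eq_nth (S : Finset ℕ) : nthElt S = Nat.nth (· ∈ S) := by
  funext k
  rw [Nat.nth_eq_getD_sort (p := (· ∈ S)) S.finite_toSet, nthElt]
  simp

namespace Finset

variable {S : Finset ℕ} {j k x : ℕ}

lemma nth_mem_of_lt_card (hk : k < #S) : Nat.nth (· ∈ S) k ∈ S :=
  Nat.nth_mem_of_lt_card (p := (· ∈ S)) S.finite_toSet (by simpa)

lemma nth_injOn_range_card : Set.InjOn (Nat.nth (· ∈ S)) (range #S) := by
  simpa using Nat.nth_injOn (p := (· ∈ S)) S.finite_toSet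

lemma exists_lt_card_nth_eq_of_mem (hx : x ∈ S) : ∃ k < #S, Nat.nth (· ∈ S) k = x := by
  simpa using Nat.exists_lt_card_finite_nth_eq (p := (· ∈ S)) S.finite_toSet hx

lemma count_nth_of_lt_card (hk : k < #S) : Nat.count (· ∈ S) (Nat.nth (· ∈ S) k) = k :=
  Nat.count_nth_of_lt_card_finite (p := (· ∈ S)) S.finite_toSet (by simpa)

lemma count_lt_card_of_mem (hx : x ∈ S) : Nat.count (· ∈ S) x < #S := by
  simpa using Nat.count_lt_card (p := (· ∈ S)) S.finite_toSet hx

lemma count_le_card (S : Finset ℕ) (x : ℕ) : Nat.count (· ∈ S) x ≤ #S := by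
  simpa using Nat.count_le_card (p := (· ∈ S)) S.finite_toSet x

lemma le_nth_of_count_le (h : Nat.count (· ∈ S) x ≤ k) (hk : k < #S) :
    x ≤ Nat.nth (· ∈ S) k := by
  by_contra! hlt
  have := Nat.count_strict_mono (p := (· ∈ S)) (nth_mem_of_lt_card hk) hlt
  rw [count_nth_of_lt_card hk] at this
  omega

variable {M : Type*} [CommMonoid M]

lemma prod_range_card_comp_nth (f : ℕ → M) :
    ∏ k ∈ range #S, f (Nat.nth (· ∈ S) k) = ∏ x ∈ S, f x :=
  prod_nbij (Nat.nth (· ∈ S)) (fun _ hk => nth_mem_of_lt_card (mem_range.1 hk))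
    nth_injOn_range_card
    (fun x hx => by simpa using exists_lt_card_nth_eq_of_mem hx) fun _ _ => rfl

lemma prod_erase_range_card_comp_nth (f : ℕ → M) (hj : j < #S) :
    ∏ k ∈ (range #S).erase j, f (Nat.nth (· ∈ S) k) =
      ∏ x ∈ S.erase (Nat.nth (· ∈ S) j), f x := by
  refine prod_nbij (Nat.nth (· ∈ S)) (fun k hk => ?_)
    (nth_injOn_range_card.mono (coe_subset.2 (erase_subset _ _)))
    (fun x hx => ?_) fun _ _ => rfl
  · obtain ⟨hkj, hk⟩ := mem_erase.1 hk
    exact mem_erase.2 ⟨fun h => hkj (nth_injOn_range_card hk (mem_range.2 hj) h),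
      nth_mem_of_lt_card (mem_range.1 hk)⟩
  · obtain ⟨hxj, hx⟩ := mem_erase.1 hx
    obtain ⟨k, hk, rfl⟩ := exists_lt_card_nth_eq_of_mem hx
    exact ⟨k, mem_erase.2 ⟨by rintro rfl; exact hxj rfl, mem_range.2 hk⟩, rfl⟩

end Finset

lemma count_add_count_sdiff {I T : Finset ℕ} (hIT : I ⊆ T) (s : ℕ) :
    Nat.count (· ∈ I) s + Nat.count (· ∈ T \ I) s = Nat.count (· ∈ T) s := by
  simp only [Nat.count_eq_card_filter_range]
  rw [← card_union_of_disjoint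
    (disjoint_filter.2 fun _ _ hI hTI => (Finset.mem_sdiff.1 hTI).2 hI), ← filter_or]
  congr 1
  refine filter_congr fun x _ => ?_
  have := @hIT x
  simp only [Finset.mem_sdiff]
  tauto

lemma count_mem_Icc_one {r s : ℕ} (hs : s ≤ r + 1) : Nat.count (· ∈ Icc 1 r) s = s - 1 := by
  rw [Nat.count_eq_card_filter_range, ← Nat.card_Ico 1 s]
  congr 1
  ext x
  simp only [mem_filter, mem_range, mem_Icc, mem_Ico]
  omega

lemma nth_Icc_sdiff_eq_iff {r s p : ℕ} {I : Finset ℕ} (hI : I ⊆ Icc 1 r) (hs : s ∈ Icc 1 r)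
    (hp : p < #(Icc 1 r \ I)) :
    Nat.nth (· ∈ Icc 1 r \ I) p = s ↔ s ∉ I ∧ Nat.count (· ∈ I) s + p + 1 = s := by
  have hs' := mem_Icc.1 hs
  have hcount := count_add_count_sdiff hI s
  rw [count_mem_Icc_one (by omega)] at hcount
  constructor
  · rintro rfl
    rw [count_nth_of_lt_card hp] at hcount
    exact ⟨(Finset.mem_sdiff.1 (nth_mem_of_lt_card hp)).2, by omega⟩
  · rintro ⟨hsI, hsum⟩
    rw [show p = Nat.count (· ∈ Icc 1 r \ I) s by omega]
    exact Nat.nth_count (Finset.mem_sdiff.2 ⟨hs, hsI⟩)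

lemma prod_Ico_one_sub_eq_factorial (s : ℕ) : ∏ x ∈ Ico 1 s, (s - x) = (s - 1)! := by
  rw [prod_Ico_eq_prod_range, ← prod_range_add_one_eq_factorial, ← prod_range_reflect]
  refine prod_congr rfl fun k hk => ?_
  rw [mem_range] at hk
  omega

lemma prod_Ioc_sub_eq_factorial (s r : ℕ) : ∏ x ∈ Ioc s r, (x - s) = (r - s)! := by
  rw [← Ico_add_one_add_one_eq_Ioc, prod_Ico_eq_prod_range,
    ← prod_range_add_one_eq_factorial]
  refine prod_congr (by congr 1; omega) fun k hk => ?_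
  omega

lemma prod_erase_Icc_abs_sub_eq_factorial_mul {r s : ℕ} (hs : s ∈ Icc 1 r) :
    ∏ x ∈ (Icc 1 r).erase s, |(x : ℝ) - s| = (s - 1)! * (r - s)! := by
  have hsplit : (Icc 1 r).erase s = Ico 1 s ∪ Ioc s r := by
    ext x; simp only [mem_erase, mem_Icc, mem_union, mem_Ico, mem_Ioc] at hs ⊢; omega
  have hdisj : Disjoint (Ico 1 s) (Ioc s r) :=
    disjoint_left.2 fun x h₁ h₂ => by simp only [mem_Ico, mem_Ioc] at h₁ h₂; omega
  rw [hsplit, prod_union hdisj, ← prod_Ico_one_sub_eq_factorial, ← prod_Ioc_sub_eq_factorial]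
  push_cast
  congr 1
  · refine prod_congr rfl fun x hx => ?_
    rw [mem_Ico] at hx
    rw [abs_of_neg (sub_neg.2 (by exact_mod_cast hx.2)), Nat.cast_sub hx.2.le]; ring
  · refine prod_congr rfl fun x hx => ?_
    rw [mem_Ioc] at hx
    rw [abs_of_pos (sub_pos.2 (by exact_mod_cast hx.1)), Nat.cast_sub hx.1.le]

lemma pureNum_eq_prod_abs {n p q : ℕ} {I : Finset ℕ} (hI : #I = n - 1) (hsI : p + q ∉ I)
    (hcount : Nat.count (· ∈ I) (p + q) = q - 1) :
    pureNum n p q I = ∏ x ∈ I, |(x : ℤ) - (p + q : ℕ)| := by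
  rw [pureNum, nthElt_eq_nth, ← hI, ← prod_range_card_comp_nth (S := I)]
  refine prod_congr rfl fun α hα => ?_
  rw [mem_range] at hα
  split_ifs with hαq
  · have := Nat.nth_lt_of_lt_count (p := (· ∈ I))
      (show α < Nat.count (· ∈ I) (p + q) by omega)
    rw [abs_sub_comm, abs_of_nonneg (by omega), max_eq_left (by omega)]
    push_cast; ring
  · have := le_nth_of_count_le (show Nat.count (· ∈ I) (p + q) ≤ α by omega) hα
    have := ne_of_mem_of_not_mem (nth_mem_of_lt_card hα) hsI
    rw [abs_of_nonneg (by omega), max_eq_left (by omega)]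
    push_cast; ring

lemma pureNum_eq_zero {n p q : ℕ} {I : Finset ℕ} (hI : #I = n - 1) (hqn : q ≤ n)
    (h : p + q ∈ I ∨ Nat.count (· ∈ I) (p + q) ≠ q - 1) : pureNum n p q I = 0 := by
  rw [pureNum, nthElt_eq_nth, ← hI]
  suffices ∃ α < #I, (if α + 1 < q then max ((p : ℤ) + q - Nat.nth (· ∈ I) α) 0
      else max ((Nat.nth (· ∈ I) α : ℤ) - p - q) 0) = 0 by
    obtain ⟨α, hα, hzero⟩ := this
    exact prod_eq_zero (mem_range.2 hα) hzero
  rcases h with hsI | hne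
  · refine ⟨_, count_lt_card_of_mem hsI, ?_⟩
    rw [Nat.nth_count hsI]
    split_ifs <;> simp
  rcases lt_or_gt_of_ne hne with hlt | hgt
  · have := le_nth_of_count_le (show Nat.count (· ∈ I) (p + q) ≤ q - 2 by omega)
      (show q - 2 < #I by omega)
    exact ⟨q - 2, by omega, by rw [if_pos (by omega)]; exact max_eq_right (by omega)⟩
  · have := Nat.nth_lt_of_lt_count hgt
    have := count_le_card I (p + q)
    exact ⟨q - 1, by omega, by rw [if_neg (by omega)]; exact max_eq_right (by omega)⟩

lemma kPure_eq_factorial_mul_prod_inv_abs_sub {n r p q : ℕ} {I : Finset ℕ}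
    (hIsub : I ⊆ Icc 1 r) (hI : #I = n - 1) (hs : p + q ∈ Icc 1 r \ I)
    (hcount : Nat.count (· ∈ I) (p + q) = q - 1) :
    kPure n r p q I =
      (r - n)! * ∏ x ∈ (Icc 1 r \ I).erase (p + q), 1 / |(x : ℝ) - (p + q : ℕ)| := by
  obtain ⟨hsr, hsI⟩ := Finset.mem_sdiff.1 hs
  have hfac : ((p + q - 1)! : ℝ) * (r - p - q)! =
      (∏ x ∈ I, |(x : ℝ) - (p + q : ℕ)|) *
        ∏ x ∈ (Icc 1 r \ I).erase (p + q), |(x : ℝ) - (p + q : ℕ)| := by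
    rw [Nat.sub_sub, ← prod_erase_Icc_abs_sub_eq_factorial_mul hsr, ← erase_sdiff_comm,
      mul_comm, prod_sdiff fun x hx => mem_erase.2 ⟨ne_of_mem_of_not_mem hx hsI, hIsub hx⟩]
  have hne : ∏ x ∈ I, |(x : ℝ) - (p + q : ℕ)| ≠ 0 :=
    prod_ne_zero_iff.2 fun x hx => abs_ne_zero.2 <| sub_ne_zero.2 <|
      Nat.cast_injective.ne (ne_of_mem_of_not_mem hx hsI)
  rw [kPure, pureNum_eq_prod_abs hI hsI hcount, hfac]
  push_cast at hne ⊢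
  rw [prod_div_distrib, prod_const_one, mul_div_assoc, div_mul_cancel_left₀ hne, one_div]

theorem stmt1_general (n r : ℕ) (hr : n ≤ r) (I : Finset ℕ)
    (hIsub : I ⊆ Finset.Icc 1 r) (hIcard : I.card = n - 1)
    (p q : ℕ) (hp : p ≤ r - n) (hq1 : 1 ≤ q) (hqn : q ≤ n) :
    ((q : ℤ) = (nthElt (Finset.Icc 1 r \ I) p : ℤ) - p →
      kPure n r p q I =
        ((r - n).factorial : ℝ) *
          ∏ ℓ ∈ (Finset.range (r - n + 1)).erase p,
            1 / |(nthElt (Finset.Icc 1 r \ I) ℓ : ℝ) - (nthElt (Finset.Icc 1 r \ I) p : ℝ)|) ∧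
    ((q : ℤ) ≠ (nthElt (Finset.Icc 1 r \ I) p : ℤ) - p → kPure n r p q I = 0) := by
  have hcard : #(Icc 1 r \ I) = r - n + 1 := by
    rw [card_sdiff_of_subset hIsub, Nat.card_Icc, hIcard]; omega
  have hs : p + q ∈ Icc 1 r := mem_Icc.2 ⟨by omega, by omega⟩
  have hiff : (q : ℤ) = (nthElt (Icc 1 r \ I) p : ℤ) - p ↔
      p + q ∉ I ∧ Nat.count (· ∈ I) (p + q) = q - 1 := by
    rw [nthElt_eq_nth]
    calc _ ↔ Nat.nth (· ∈ Icc 1 r \ I) p = p + q := by omega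
      _ ↔ _ := nth_Icc_sdiff_eq_iff hIsub hs (by omega)
      _ ↔ _ := and_congr_right fun _ => by omega
  refine ⟨fun h => ?_, fun h => ?_⟩
  · obtain ⟨hsI, hcount⟩ := hiff.1 h
    have hnth : Nat.nth (· ∈ Icc 1 r \ I) p = p + q := by rw [nthElt_eq_nth] at h; omega
    rw [kPure_eq_factorial_mul_prod_inv_abs_sub hIsub hIcard (Finset.mem_sdiff.2 ⟨hs, hsI⟩)
      hcount, nthElt_eq_nth, ← hcard, hnth,
      prod_erase_range_card_comp_nth (fun x => 1 / |(x : ℝ) - (p + q : ℕ)|) (by omega), hnth]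
  · rw [kPure, pureNum_eq_zero (p := p) hIcard hqn (by tauto), Int.cast_zero, mul_zero, zero_div]

theorem stmt1 (n r : ℕ) (hn : 2 ≤ n) (hr : n ≤ r) (I : Finset ℕ)
    (hIsub : I ⊆ Finset.Icc 1 r) (hIcard : I.card = n - 1)
    (p q : ℕ) (hp : p ≤ r - n) (hq1 : 1 ≤ q) (hqn : q ≤ n) :
    ((q : ℤ) = (nthElt (Finset.Icc 1 r \ I) p : ℤ) - p →
      kPure n r p q I =
        ((r - n).factorial : ℝ) *
          ∏ ℓ ∈ (Finset.range (r - n + 1)).erase p,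
            1 / |(nthElt (Finset.Icc 1 r \ I) ℓ : ℝ) - (nthElt (Finset.Icc 1 r \ I) p : ℝ)|) ∧
    ((q : ℤ) ≠ (nthElt (Finset.Icc 1 r \ I) p : ℤ) - p → kPure n r p q I = 0) :=
  stmt1_general n r hr I hIsub hIcard p q hp hq1 hqn
end
end

section
/- Fix integers n ≥ 2, r ≥ n, 1 ≤ q ≤ n and 0 ≤ p ≤ r−n. Then (1/2) · Σ_I k_{p,q}(π(r,I)) = C(r−n,p) · (1/2) · σ_{q−1}(p+q−1) · σ_{n−q}(r−p−q) / ( ((p+q−1)!/p!) · ((r−p−q)!/(r−p−n)!) ), where the sum is over all (n−1)-element subsets I of [r] = {1,…,r} and C(r−n,p) denotes the binomial coefficient. -/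
open MeasureTheory Filter

noncomputable section

/-!
Write `m = p + q` and `i_1 < ⋯ < i_{n-1}` for the elements of `I`. The product defining
`k_{p,q}(π(r,I))` vanishes unless `i_{q-1} < m < i_q`, that is, unless `I` has exactly `q - 1`
elements below `m` and avoids `m`; in that case it equals `∏_{i ∈ I} |i - m|`. Such `I` are the
unions `A ∪ B` of a `(q-1)`-subset `A` of `{1, …, m-1}` and an `(n-q)`-subset `B` of
`{m+1, …, r}`, so the sum factors, and the substitutions `i ↦ m - i` on `A` and `i ↦ i - m` on `B`
turn the two factors into `σ_{q-1}(m-1)` and `σ_{n-q}(r-m)`. The factorials then combine through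
`C(r-n, p) · p! · (r-n-p)! = (r-n)!`.
-/

open Finset

theorem Monotone.apply_lt_iff_lt_card_filter {β : Type*} [LinearOrder β] {k : ℕ}
    {e : Fin k → β} (he : Monotone e) (m : β) (α : Fin k) :
    e α < m ↔ (α : ℕ) < #{γ | e γ < m} := by
  constructor
  · intro hα
    have : Iic α ⊆ ({γ | e γ < m} : Finset (Fin k)) := fun γ hγ =>
      mem_filter.2 ⟨mem_univ γ, (he (mem_Iic.1 hγ)).trans_lt hα⟩
    have := card_le_card this
    rw [Fin.card_Iic] at this
    omega
  · intro hα
    by_contra! hle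
    have : ({γ | e γ < m} : Finset (Fin k)) ⊆ Iio α := fun γ hγ =>
      mem_Iio.2 (lt_of_not_ge fun hαγ => not_lt.2 (hle.trans (he hαγ)) (mem_filter.1 hγ).2)
    have := card_le_card this
    rw [Fin.card_Iio] at this
    omega

theorem Fin.forall_lt_iff_lt_iff_eq {k a b : ℕ} (ha : a ≤ k) (hb : b ≤ k) :
    (∀ α : Fin k, (α : ℕ) < a ↔ (α : ℕ) < b) ↔ a = b := by
  refine ⟨fun h => ?_, fun h α => h ▸ Iff.rfl⟩
  by_contra hne
  rcases Nat.lt_or_gt_of_ne hne with hab | hab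
  · exact absurd (h ⟨a, by omega⟩) (by simp [hab])
  · exact absurd (h ⟨b, by omega⟩) (by simp [hab])

theorem nthElt_eq_orderEmbOfFin {I : Finset ℕ} {k : ℕ} (h : #I = k) (α : Fin k) :
    nthElt I α = I.orderEmbOfFin h α := by
  rw [orderEmbOfFin_apply, nthElt, List.getD_eq_getElem?_getD,
    List.getElem?_eq_getElem (by rw [length_sort, h]; exact α.2)]
  rfl

theorem card_filter_orderEmbOfFin_lt {I : Finset ℕ} {k : ℕ} (h : #I = k) (m : ℕ) :
    #{α | I.orderEmbOfFin h α < m} = #{i ∈ I | i < m} := by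
  conv_rhs => rw [← map_orderEmbOfFin_univ I h, filter_map, card_map]
  rfl

theorem pureNum_eq_ite {n p q : ℕ} (hqn : q ≤ n) {I : Finset ℕ} (hI : #I = n - 1) :
    pureNum n p q I =
      if #{i ∈ I | i < p + q} = q - 1 ∧ p + q ∉ I then ∏ i ∈ I, |(i : ℤ) - (p + q)| else 0 := by
  set e := I.orderEmbOfFin hI
  have factor (α x : ℕ) :
      (if α + 1 < q then max ((p : ℤ) + q - x) 0 else max ((x : ℤ) - p - q) 0) =
        if (α + 1 < q ↔ x < p + q) ∧ x ≠ p + q then |(x : ℤ) - (p + q)| else 0 := by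
    rw [abs_eq_max_neg]
    split_ifs <;> omega
  have lower :
      (∀ α : Fin (n - 1), (α : ℕ) + 1 < q ↔ e α < p + q) ↔ #{i ∈ I | i < p + q} = q - 1 := by
    have shift (α : Fin (n - 1)) : ((α : ℕ) + 1 < q ↔ e α < p + q) ↔
        ((α : ℕ) < q - 1 ↔ (α : ℕ) < #{i ∈ I | i < p + q}) := by
      rw [e.strictMono.monotone.apply_lt_iff_lt_card_filter, card_filter_orderEmbOfFin_lt]
      omega
    rw [forall_congr' shift, Fin.forall_lt_iff_lt_iff_eq (by omega) (hI ▸ card_filter_le _ _),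
      eq_comm]
  have avoids : (∀ α : Fin (n - 1), e α ≠ p + q) ↔ p + q ∉ I := by
    rw [← mem_coe, ← range_orderEmbOfFin I hI, Set.mem_range, not_exists]
  calc pureNum n p q I = ∏ α : Fin (n - 1),
        if ((α : ℕ) + 1 < q ↔ e α < p + q) ∧ e α ≠ p + q then |(e α : ℤ) - (p + q)| else 0 := by
        rw [pureNum, ← Fin.prod_univ_eq_prod_range]
        simp only [nthElt_eq_orderEmbOfFin hI, factor]
        rfl
    _ = _ := by
      rw [Fintype.prod_ite_zero]
      simp only [forall_and, lower, avoids]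
      congr 1
      rw [← map_orderEmbOfFin_univ I hI, prod_map]
      rfl

section Split

variable {α : Type*} [LinearOrder α]

theorem filter_lt_union_filter_gt {I : Finset α} {m : α} (hm : m ∉ I) :
    {i ∈ I | i < m} ∪ {i ∈ I | m < i} = I := by
  rw [← filter_or]
  exact filter_true_of_mem fun i hi => lt_or_gt_of_ne (ne_of_mem_of_not_mem hi hm)

theorem filter_lt_union_of_subset {A B : Finset α} {m : α} (hA : ∀ a ∈ A, a < m)
    (hB : ∀ b ∈ B, m < b) : {i ∈ A ∪ B | i < m} = A := by
  rw [filter_union, filter_true_of_mem hA, filter_false_of_mem fun b hb => (hB b hb).not_gt,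
    union_empty]

theorem filter_gt_union_of_subset {A B : Finset α} {m : α} (hA : ∀ a ∈ A, a < m)
    (hB : ∀ b ∈ B, m < b) : {i ∈ A ∪ B | m < i} = B := by
  rw [filter_union, filter_false_of_mem fun a ha => (hA a ha).not_gt, filter_true_of_mem hB,
    empty_union]

theorem sum_powersetCard_filter_split {R : Type*} [CommSemiring R] (s : Finset α) (m : α)
    (j l : ℕ) (g : α → R) :
    ∑ I ∈ powersetCard (j + l) s with #{i ∈ I | i < m} = j ∧ m ∉ I, ∏ i ∈ I, g i =
      (∑ A ∈ powersetCard j {i ∈ s | i < m}, ∏ i ∈ A, g i) *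
        ∑ B ∈ powersetCard l {i ∈ s | m < i}, ∏ i ∈ B, g i := by
  have disj (I : Finset α) : Disjoint {i ∈ I | i < m} {i ∈ I | m < i} :=
    disjoint_filter.2 fun _ _ => lt_asymm
  have bounds (P : Finset α × Finset α)
      (hP : P ∈ powersetCard j {i ∈ s | i < m} ×ˢ powersetCard l {i ∈ s | m < i}) :
      (∀ a ∈ P.1, a < m) ∧ ∀ b ∈ P.2, m < b := by
    simp only [mem_product, mem_powersetCard] at hP
    exact ⟨fun a ha => (mem_filter.1 (hP.1.1 ha)).2, fun b hb => (mem_filter.1 (hP.2.1 hb)).2⟩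
  rw [sum_mul_sum, ← sum_product']
  refine sum_nbij' (fun I => ({i ∈ I | i < m}, {i ∈ I | m < i})) (fun P => P.1 ∪ P.2)
    ?_ ?_ ?_ ?_ ?_
  · intro I hI
    simp only [mem_filter, mem_powersetCard] at hI
    obtain ⟨⟨hIs, hIcard⟩, hlow, hm⟩ := hI
    have hcard := card_union_of_disjoint (disj I)
    rw [filter_lt_union_filter_gt hm, hIcard, hlow] at hcard
    simp only [mem_product, mem_powersetCard]
    exact ⟨⟨filter_subset_filter _ hIs, hlow⟩, filter_subset_filter _ hIs, by omega⟩
  · intro P hP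
    obtain ⟨hA, hB⟩ := bounds P hP
    simp only [mem_product, mem_powersetCard] at hP
    obtain ⟨⟨hAs, hAcard⟩, hBs, hBcard⟩ := hP
    have hdisj : Disjoint P.1 P.2 := disjoint_left.2 fun a ha hb => lt_asymm (hA a ha) (hB a hb)
    rw [mem_filter, mem_powersetCard, filter_lt_union_of_subset hA hB,
      card_union_of_disjoint hdisj, hAcard, hBcard]
    refine ⟨⟨union_subset (hAs.trans (filter_subset _ _)) (hBs.trans (filter_subset _ _)), rfl⟩,
      rfl, fun hm => ?_⟩
    rcases mem_union.1 hm with hm | hm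
    · exact lt_irrefl m (hA m hm)
    · exact lt_irrefl m (hB m hm)
  · intro I hI
    exact filter_lt_union_filter_gt (mem_filter.1 hI).2.2
  · intro P hP
    obtain ⟨hA, hB⟩ := bounds P hP
    rw [filter_lt_union_of_subset hA hB, filter_gt_union_of_subset hA hB]
  · intro I hI
    rw [← prod_union (disj I), filter_lt_union_filter_gt (mem_filter.1 hI).2.2]

end Split

theorem sum_powersetCard_prod_map {α R : Type*} [CommSemiring R] (f : α ↪ R) (s : Finset α)
    (b : ℕ) :
    ∑ A ∈ powersetCard b s, ∏ i ∈ A, f i = ∑ B ∈ powersetCard b (s.map f), ∏ j ∈ B, j := by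
  rw [powersetCard_map, sum_map]
  exact sum_congr rfl fun A _ => (prod_map A f fun j => j).symm

theorem sum_powersetCard_prod_eq_sigmaFn (f : ℕ ↪ ℤ) {s : Finset ℕ} {a : ℕ}
    (hs : s.map f = (Icc 1 a).map Nat.castEmbedding) (b : ℕ) :
    ∑ A ∈ powersetCard b s, ∏ i ∈ A, f i = sigmaFn b a := by
  rw [sum_powersetCard_prod_map, hs, ← sum_powersetCard_prod_map, sigmaFn]
  push_cast
  rfl

theorem map_subLeft_filter_lt_Icc {m r : ℕ} (hm : m ≤ r + 1) :
    {i ∈ Icc 1 r | i < m}.map (Nat.castEmbedding.trans (Equiv.subLeft (m : ℤ)).toEmbedding) =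
      (Icc 1 (m - 1)).map Nat.castEmbedding := by
  ext x
  simp only [Finset.mem_map, mem_filter, mem_Icc, Function.Embedding.trans_apply,
    Equiv.coe_toEmbedding, Equiv.subLeft_apply, Nat.castEmbedding_apply]
  constructor
  · rintro ⟨i, ⟨⟨h1, h2⟩, h3⟩, rfl⟩
    exact ⟨m - i, ⟨by omega, by omega⟩, by omega⟩
  · rintro ⟨i, ⟨h1, h2⟩, rfl⟩
    exact ⟨m - i, ⟨⟨by omega, by omega⟩, by omega⟩, by omega⟩

theorem map_subRight_filter_gt_Icc (m r : ℕ) :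
    {i ∈ Icc 1 r | m < i}.map (Nat.castEmbedding.trans (Equiv.subRight (m : ℤ)).toEmbedding) =
      (Icc 1 (r - m)).map Nat.castEmbedding := by
  ext x
  simp only [Finset.mem_map, mem_filter, mem_Icc, Function.Embedding.trans_apply,
    Equiv.coe_toEmbedding, Equiv.subRight_apply, Nat.castEmbedding_apply]
  constructor
  · rintro ⟨i, ⟨⟨h1, h2⟩, h3⟩, rfl⟩
    exact ⟨i - m, ⟨by omega, by omega⟩, by omega⟩
  · rintro ⟨i, ⟨h1, h2⟩, rfl⟩
    exact ⟨i + m, ⟨⟨by omega, by omega⟩, by omega⟩, by omega⟩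

theorem sum_pureNum {n r p q : ℕ} (hpq : p + q ≤ r + 1) (hq1 : 1 ≤ q) (hqn : q ≤ n) :
    ∑ I ∈ powersetCard (n - 1) (Icc 1 r), pureNum n p q I =
      sigmaFn (q - 1) (p + q - 1) * sigmaFn (n - q) (r - p - q) := by
  rw [sum_congr rfl fun I hI => pureNum_eq_ite hqn (mem_powersetCard.1 hI).2, ← sum_filter,
    show n - 1 = (q - 1) + (n - q) by omega, sum_powersetCard_filter_split,
    ← sum_powersetCard_prod_eq_sigmaFn _ (map_subLeft_filter_lt_Icc hpq),
    show r - p - q = r - (p + q) by omega,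
    ← sum_powersetCard_prod_eq_sigmaFn _ (map_subRight_filter_gt_Icc (p + q) r)]
  congr 1
  · refine sum_congr rfl fun A hA => prod_congr rfl fun i hi => ?_
    have := (mem_filter.1 ((mem_powersetCard.1 hA).1 hi)).2
    change |(i : ℤ) - (p + q)| = ((p + q : ℕ) : ℤ) - i
    rw [abs_of_neg (by omega)]
    omega
  · refine sum_congr rfl fun B hB => prod_congr rfl fun i hi => ?_
    have := (mem_filter.1 ((mem_powersetCard.1 hB).1 hi)).2
    change |(i : ℤ) - (p + q)| = (i : ℤ) - (p + q : ℕ)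
    rw [abs_of_pos (by omega)]
    omega

theorem stmt3_general (n r p q : ℕ) (hr : n ≤ r) (hq1 : 1 ≤ q) (hqn : q ≤ n)
    (hp : p ≤ r - n) :
    (1 / 2 : ℝ) * ∑ I ∈ (Finset.Icc 1 r).powersetCard (n - 1), kPure n r p q I =
      ((r - n).choose p : ℝ) * (1 / 2) *
        ((sigmaFn (q - 1) (p + q - 1) : ℝ) * (sigmaFn (n - q) (r - p - q) : ℝ)) /
        ((((p + q - 1).factorial : ℝ) / (p.factorial : ℝ)) *
          (((r - p - q).factorial : ℝ) / ((r - p - n).factorial : ℝ))) := by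
  have hsum : ∑ I ∈ powersetCard (n - 1) (Icc 1 r), kPure n r p q I =
      (r - n).factorial * ((∑ I ∈ powersetCard (n - 1) (Icc 1 r), pureNum n p q I : ℤ) : ℝ) /
        ((p + q - 1).factorial * (r - p - q).factorial) := by
    simp only [kPure, ← sum_div, ← mul_sum, Int.cast_sum]
  rw [hsum, sum_pureNum (by omega) hq1 hqn, show r - p - n = r - n - p by omega,
    ← Nat.choose_mul_factorial_mul_factorial hp]
  push_cast
  field_simp

theorem stmt3 (n r p q : ℕ) (hn : 2 ≤ n) (hr : n ≤ r) (hq1 : 1 ≤ q) (hqn : q ≤ n)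
    (hp : p ≤ r - n) :
    (1 / 2 : ℝ) * ∑ I ∈ (Finset.Icc 1 r).powersetCard (n - 1), kPure n r p q I =
      ((r - n).choose p : ℝ) * (1 / 2) *
        ((sigmaFn (q - 1) (p + q - 1) : ℝ) * (sigmaFn (n - q) (r - p - q) : ℝ)) /
        ((((p + q - 1).factorial : ℝ) / (p.factorial : ℝ)) *
          (((r - p - q).factorial : ℝ) / ((r - p - n).factorial : ℝ))) :=
  stmt3_general n r p q hr hq1 hqn hp
end
end

section
/- Let h : ℝ → ℝ be continuous on [0,1] with 0 ≤ h(t) ≤ 1 for all t ∈ [0,1], and assume h is not identically zero on [1/2,1]. Set c_h = ∫_{1/2}^{1} h(t)·(t − 1/2) dt. Then c_h > 0, and for every real number a and every sequence {p_r} of integers with 0 ≤ p_r ≤ r−2 and lim_{r→∞} (2·p_r − r)/√r = a, one has lim_{r→∞} ( Σ_{i=1}^{r} h(i/r) · (i − p_r − 1)_+ ) / ( 2·(r − p_r − 1) · r · c_h ) = 1. -/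
/-!
Dividing by `r²`, the `i`-th summand becomes `h (i/r) · (i/r - s_r)₊` with `s_r = (p_r + 1)/r`, and
the hypothesis on `p_r` forces `s_r → 1/2`. As `|h| ≤ 1`, these integrands converge uniformly on
`[0,1]` to `h t · (t - 1/2)₊`, so the normalised sums are Riemann sums converging to
`∫₀¹ h t · (t - 1/2)₊ dt = c_h`, while `2 (r - p_r - 1)/r → 1`. Positivity of `c_h` holds because
`h` is continuous, nonnegative and somewhere nonzero on `[1/2, 1]`.
-/

open MeasureTheory Filter intervalIntegral Set Topology

lemma ContinuousOn.exists_mem_Ioo_pos {f : ℝ → ℝ} {a b t : ℝ} (hab : a < b)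
    (hf : ContinuousOn f (Icc a b)) (ht : t ∈ Icc a b) (hft : 0 < f t) :
    ∃ s ∈ Ioo a b, 0 < f s := by
  have hpos : ∀ᶠ s in 𝓝[Icc a b] t, 0 < f s := (hf t ht).eventually (eventually_gt_nhds hft)
  have : (𝓝[Ioo a b] t).NeBot := by
    rwa [← mem_closure_iff_nhdsWithin_neBot, closure_Ioo hab.ne]
  obtain ⟨s, hs, hfs⟩ :=
    ((hpos.filter_mono (nhdsWithin_mono t Ioo_subset_Icc_self)).and
      self_mem_nhdsWithin).exists
  exact ⟨s, hfs, hs⟩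

lemma integral_mul_sub_left_pos {f : ℝ → ℝ} {a b : ℝ} (hab : a < b)
    (hf : ContinuousOn f (Icc a b)) (hf0 : ∀ t ∈ Icc a b, 0 ≤ f t)
    (hne : ∃ t ∈ Icc a b, f t ≠ 0) : 0 < ∫ t in a..b, f t * (t - a) := by
  obtain ⟨t, ht, hft⟩ := hne
  obtain ⟨s, hs, hfs⟩ := hf.exists_mem_Ioo_pos hab ht ((hf0 t ht).lt_of_ne' hft)
  refine integral_pos hab (hf.mul (continuousOn_id.sub continuousOn_const)) ?_
    ⟨s, Ioo_subset_Icc_self hs, mul_pos hfs (sub_pos.2 hs.1)⟩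
  exact fun x hx => mul_nonneg (hf0 x (Ioc_subset_Icc_self hx)) (sub_nonneg.2 hx.1.le)

lemma integral_mul_max_sub_eq {f : ℝ → ℝ} {a b c : ℝ} (hac : a ≤ c) (hcb : c ≤ b)
    (hf : ContinuousOn f (Icc a b)) :
    ∫ t in a..b, f t * max (t - c) 0 = ∫ t in c..b, f t * (t - c) := by
  have hcont : ContinuousOn (fun t => f t * max (t - c) 0) (Icc a b) :=
    hf.mul ((continuous_id.sub continuous_const).max continuous_const).continuousOn
  have hleft : EqOn (fun t => f t * max (t - c) 0) (fun _ => 0) (uIcc a c) := fun t ht => by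
    rw [uIcc_of_le hac] at ht
    simp [max_eq_right (sub_nonpos.2 ht.2)]
  have hright : EqOn (fun t => f t * max (t - c) 0) (fun t => f t * (t - c)) (uIcc c b) :=
    fun t ht => by
      rw [uIcc_of_le hcb] at ht
      simp [max_eq_left (sub_nonneg.2 ht.1)]
  rw [← integral_add_adjacent_intervals
      ((hcont.mono (Icc_subset_Icc_right hcb)).intervalIntegrable_of_Icc hac)
      ((hcont.mono (Icc_subset_Icc_left hac)).intervalIntegrable_of_Icc hcb),
    integral_congr hleft, integral_congr hright, intervalIntegral.integral_zero, zero_add]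

lemma tendsto_div_natCast_of_tendsto_div_sqrt {x : ℕ → ℝ} {a : ℝ}
    (hx : Tendsto (fun r : ℕ => x r / Real.sqrt r) atTop (𝓝 a)) :
    Tendsto (fun r : ℕ => x r / r) atTop (𝓝 0) := by
  have hinv : Tendsto (fun r : ℕ => (Real.sqrt r)⁻¹) atTop (𝓝 0) :=
    tendsto_inv_atTop_zero.comp (Real.tendsto_sqrt_atTop.comp tendsto_natCast_atTop_atTop)
  rw [← mul_zero a]
  refine (hx.mul hinv).congr fun r => ?_
  rw [← div_eq_mul_inv, div_div, Real.mul_self_sqrt r.cast_nonneg]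

lemma abs_mul_sub_integral_le {g : ℝ → ℝ} {a b c ε : ℝ} (hab : a ≤ b)
    (hg : IntervalIntegrable g volume a b) (hc : ∀ t ∈ Icc a b, |c - g t| ≤ ε) :
    |c * (b - a) - ∫ t in a..b, g t| ≤ ε * (b - a) := by
  have hconst : c * (b - a) = ∫ _ in a..b, c := by simp [mul_comm]
  rw [hconst, ← integral_sub intervalIntegrable_const hg, ← abs_of_nonneg (sub_nonneg.2 hab)]
  exact norm_integral_le_of_norm_le_const fun t ht =>
    (Real.norm_eq_abs _).trans_le (hc t (Ioc_subset_Icc_self (uIoc_of_le hab ▸ ht)))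

lemma abs_riemannSum_sub_integral_le {g : ℝ → ℝ} {u : ℕ → ℝ} {n : ℕ} {ε : ℝ} (hn : 0 < n)
    (hg : IntervalIntegrable g volume 0 1)
    (hu : ∀ k < n, ∀ t ∈ Icc (k / n : ℝ) ((k + 1) / n), |u (k + 1) - g t| ≤ ε) :
    |(∑ i ∈ Finset.Icc 1 n, u i) / n - ∫ t in 0..1, g t| ≤ ε := by
  set x : ℕ → ℝ := fun k => k / n with hx
  have hstep : ∀ k, x (k + 1) - x k = 1 / n := fun k => by simp only [hx]; push_cast; ring
  have hxle : ∀ k, x k ≤ x (k + 1) := fun k => by simp only [hx]; gcongr; linarith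
  have hsub : ∀ k < n, uIcc (x k) (x (k + 1)) ⊆ uIcc 0 1 := fun k hk => by
    rw [uIcc_of_le (hxle k), uIcc_of_le zero_le_one]
    refine Icc_subset_Icc (by positivity) ?_
    rw [hx, div_le_one (by exact_mod_cast hn)]
    exact_mod_cast hk
  have hint : ∫ t in 0..1, g t = ∑ k ∈ Finset.range n, ∫ t in x k..x (k + 1), g t := by
    rw [sum_integral_adjacent_intervals fun k hk => hg.mono_set (hsub k hk)]
    simp [hx, hn.ne']
  have hsum : (∑ i ∈ Finset.Icc 1 n, u i) / n
      = ∑ k ∈ Finset.range n, u (k + 1) * (x (k + 1) - x k) := by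
    simp only [hstep, mul_one_div, ← Finset.sum_div]
    rw [Finset.range_eq_Ico, Finset.sum_Ico_add', zero_add, Finset.Ico_add_one_right_eq_Icc]
  rw [hint, hsum, ← Finset.sum_sub_distrib]
  calc _ ≤ ∑ k ∈ Finset.range n, |u (k + 1) * (x (k + 1) - x k) - ∫ t in x k..x (k + 1), g t| :=
        Finset.abs_sum_le_sum_abs _ _
    _ ≤ ∑ k ∈ Finset.range n, ε * (x (k + 1) - x k) := Finset.sum_le_sum fun k hk =>
        abs_mul_sub_integral_le (hxle k) (hg.mono_set (hsub k (Finset.mem_range.1 hk)))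
          fun t ht => hu k (Finset.mem_range.1 hk) t (by simpa [hx] using ht)
    _ = ε := by simp only [hstep, Finset.sum_const, Finset.card_range, nsmul_eq_mul]; field_simp

lemma tendsto_riemannSum_of_tendstoUniformlyOn {F : ℕ → ℝ → ℝ} {g : ℝ → ℝ}
    (hg : ContinuousOn g (Icc 0 1)) (hF : TendstoUniformlyOn F g atTop (Icc 0 1)) :
    Tendsto (fun n : ℕ => (∑ i ∈ Finset.Icc 1 n, F n (i / n)) / n) atTop
      (𝓝 (∫ t in 0..1, g t)) := by
  rw [Metric.tendsto_nhds]
  intro ε hε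
  obtain ⟨δ, hδ, hgδ⟩ := Metric.uniformContinuousOn_iff.1
    (isCompact_Icc.uniformContinuousOn_of_continuous hg) (ε / 3) (by positivity)
  filter_upwards [Metric.tendstoUniformlyOn_iff.1 hF (ε / 3) (by positivity),
    eventually_gt_atTop 0, tendsto_one_div_atTop_nhds_zero_nat.eventually_lt_const hδ]
    with n hFn hn hnδ
  refine lt_of_le_of_lt (abs_riemannSum_sub_integral_le (ε := 2 * ε / 3) hn
    (hg.intervalIntegrable_of_Icc zero_le_one) fun k hk t ht => ?_) (by linarith)
  have hnpos : (0 : ℝ) < n := by exact_mod_cast hn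
  have hkn : ((k : ℝ) + 1) / n ∈ Icc (0 : ℝ) 1 :=
    ⟨by positivity, (div_le_one hnpos).2 (by exact_mod_cast hk)⟩
  have htI : t ∈ Icc (0 : ℝ) 1 :=
    ⟨le_trans (by positivity) ht.1, ht.2.trans hkn.2⟩
  have hdist : dist (((k : ℝ) + 1) / n) t < δ := by
    rw [Real.dist_eq, abs_of_nonneg (sub_nonneg.2 ht.2)]
    calc _ ≤ ((k : ℝ) + 1) / n - k / n := by linarith [ht.1]
      _ = 1 / n := by ring
      _ < δ := hnδ
  have h1 := hFn _ hkn
  have h2 := hgδ _ hkn _ htI hdist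
  rw [dist_comm, Real.dist_eq] at h1
  rw [Real.dist_eq] at h2
  push_cast
  calc _ ≤ |F n ((k + 1) / n) - g ((k + 1) / n)| + |g ((k + 1) / n) - g t| := abs_sub_le _ _ _
    _ ≤ 2 * ε / 3 := by linarith

lemma tendstoUniformlyOn_mul_max_sub {ι : Type*} {l : Filter ι} {f : ℝ → ℝ} {S : Set ℝ}
    {x : ι → ℝ} {c M : ℝ} (hf : ∀ t ∈ S, |f t| ≤ M) (hx : Tendsto x l (𝓝 c)) :
    TendstoUniformlyOn (fun n t => f t * max (t - x n) 0) (fun t => f t * max (t - c) 0) l S := by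
  rw [Metric.tendstoUniformlyOn_iff]
  intro ε hε
  have hM : Tendsto (fun n => M * |x n - c|) l (𝓝 0) := by
    simpa using ((hx.sub_const c).abs.const_mul M)
  filter_upwards [hM.eventually_lt_const hε] with n hn t ht
  rw [Real.dist_eq, ← mul_sub, abs_mul]
  refine lt_of_le_of_lt
    (mul_le_mul (hf t ht) ?_ (abs_nonneg _) ((abs_nonneg _).trans (hf t ht))) hn
  refine (abs_max_sub_max_le_abs _ _ _).trans_eq ?_
  congr 1
  ring

theorem stmt12 (h : ℝ → ℝ) (hcont : ContinuousOn h (Set.Icc 0 1))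
    (hbd : ∀ t ∈ Set.Icc (0 : ℝ) 1, h t ∈ Set.Icc (0 : ℝ) 1)
    (hne : ∃ t ∈ Set.Icc (1 / 2 : ℝ) 1, h t ≠ 0)
    (c_h : ℝ) (hch : c_h = ∫ t in (1 / 2 : ℝ)..1, h t * (t - 1 / 2)) :
    0 < c_h ∧
    ∀ a : ℝ, ∀ p : ℕ → ℕ, (∀ r, p r ≤ r - 2) →
      Filter.Tendsto (fun r : ℕ => ((2 * p r : ℝ) - r) / Real.sqrt r)
        Filter.atTop (nhds a) →
      Filter.Tendsto
        (fun r : ℕ =>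
          (∑ i ∈ Finset.Icc 1 r,
              h ((i : ℝ) / r) * ((max ((i : ℤ) - p r - 1) 0 : ℤ) : ℝ)) /
            (2 * ((r : ℝ) - p r - 1) * r * c_h))
        Filter.atTop (nhds 1) := by
  have hhalf : Icc (1 / 2 : ℝ) 1 ⊆ Icc 0 1 := Icc_subset_Icc (by norm_num) le_rfl
  have hpos : 0 < c_h := hch ▸ integral_mul_sub_left_pos (by norm_num) (hcont.mono hhalf)
    (fun t ht => (hbd t (hhalf ht)).1) hne
  refine ⟨hpos, fun a p _ hlim => ?_⟩
  have hshift : Tendsto (fun r : ℕ => ((p r : ℝ) + 1) / r) atTop (𝓝 (1 / 2)) := by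
    have := (((tendsto_div_natCast_of_tendsto_div_sqrt hlim).div_const 2).add_const (1 / 2)).add
      tendsto_one_div_atTop_nhds_zero_nat
    rw [zero_div, zero_add, add_zero] at this
    refine this.congr' ?_
    filter_upwards [eventually_gt_atTop 0] with r hr
    field_simp
    ring
  have hnum : Tendsto (fun r : ℕ =>
      (∑ i ∈ Finset.Icc 1 r, h (i / r) * max ((i : ℝ) - p r - 1) 0) / r ^ 2)
      atTop (𝓝 c_h) := by
    have hriemann := tendsto_riemannSum_of_tendstoUniformlyOn
      (g := fun t => h t * max (t - 1 / 2) 0)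
      (hcont.mul ((continuous_id.sub continuous_const).max continuous_const).continuousOn)
      (tendstoUniformlyOn_mul_max_sub (M := 1)
        (fun t ht => abs_le.2 ⟨by linarith [(hbd t ht).1], (hbd t ht).2⟩) hshift)
    rw [integral_mul_max_sub_eq (by norm_num) (by norm_num) hcont, ← hch] at hriemann
    refine hriemann.congr' ?_
    filter_upwards [eventually_gt_atTop 0] with r hr
    rw [pow_two, ← div_div]
    congr 1
    rw [Finset.sum_div]
    refine Finset.sum_congr rfl fun i _ => ?_
    rw [mul_div_assoc, ← max_div_div_right r.cast_nonneg, zero_div, sub_sub, sub_div]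
  have hden : Tendsto (fun r : ℕ => 2 * ((r : ℝ) - p r - 1) / r) atTop (𝓝 1) := by
    have := (hshift.const_sub 1).const_mul 2
    rw [show (2 : ℝ) * (1 - 1 / 2) = 1 by norm_num] at this
    refine this.congr' ?_
    filter_upwards [eventually_gt_atTop 0] with r hr
    field_simp
    ring
  have hquot := hnum.div (hden.mul_const c_h) (by rw [one_mul]; exact hpos.ne')
  rw [one_mul, div_self hpos.ne'] at hquot
  refine hquot.congr' ?_
  filter_upwards [eventually_gt_atTop 0] with r hr
  simp only [Pi.div_apply]
  push_cast
  field_simp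
end

section
/- Let h : ℝ → ℝ be continuous on [0,1], and let {p_r} be a sequence of integers with lim_{r→∞} p_r/r = 1/2. Then lim_{r→∞} (1/r²) · Σ_{i=1}^{r} h(i/r) · (i − p_r − 1)_+ = ∫_{1/2}^{1} h(t)·(t − 1/2) dt. -/
/-!
Since `(i - p_r - 1)_+ / r = (i / r - c_r)_+` with `c_r = (p_r + 1) / r`, the normalized sum is the
right-endpoint Riemann sum of `t ↦ h t * (t - c_r)_+` on `[0, 1]`. As `c ↦ (t - c)_+` is
1-Lipschitz, replacing `c_r` by `1 / 2` changes it by at most `sup |h| * |c_r - 1 / 2| → 0`, while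
the Riemann sums of the continuous function `t ↦ h t * (t - 1 / 2)_+` converge to its integral over
`[0, 1]`, which is the integral of `h t * (t - 1 / 2)` over `[1 / 2, 1]`.
-/

open MeasureTheory Filter intervalIntegral Set Topology

noncomputable section

def rightRiemannSum (g : ℝ → ℝ) (r : ℕ) : ℝ :=
  (1 / (r : ℝ)) * ∑ i ∈ Finset.Icc 1 r, g ((i : ℝ) / r)

lemma integral_zero_one_eq_sum_integral_div {g : ℝ → ℝ} (hg : IntervalIntegrable g volume 0 1)
    {r : ℕ} (hr : r ≠ 0) :
    ∫ t in (0 : ℝ)..1, g t = ∑ k ∈ Finset.range r, ∫ t in (k / r : ℝ)..((k + 1 : ℕ) / r), g t := by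
  have hr' : (r : ℝ) ≠ 0 := by exact_mod_cast hr
  rw [sum_integral_adjacent_intervals fun k hk => hg.mono_set ?_]
  · simp [hr']
  · rw [uIcc_of_le zero_le_one, uIcc_of_le (by gcongr; simp)]
    exact Icc_subset_Icc (by positivity) ((div_le_one (by positivity)).2 (by exact_mod_cast hk))

lemma abs_integral_sub_mul_le {g : ℝ → ℝ} {a b c ε : ℝ} (hab : a ≤ b)
    (hg : IntervalIntegrable g volume a b) (h : ∀ t ∈ Ioc a b, |g t - c| ≤ ε) :
    |(∫ t in a..b, g t) - (b - a) * c| ≤ ε * (b - a) := by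
  have := norm_integral_le_of_norm_le_const (f := fun t => g t - c) (a := a) (b := b) (C := ε)
    (by simpa [uIoc_of_le hab] using h)
  rw [integral_sub hg intervalIntegrable_const, intervalIntegral.integral_const,
    smul_eq_mul] at this
  simpa [abs_of_nonneg (sub_nonneg.2 hab)] using this

lemma rightRiemannSum_eq_sum_range (g : ℝ → ℝ) (r : ℕ) :
    rightRiemannSum g r =
      ∑ k ∈ Finset.range r, (((k + 1 : ℕ) : ℝ) / r - (k : ℝ) / r) * g (((k + 1 : ℕ) : ℝ) / r) := by
  rw [rightRiemannSum, ← Finset.Ico_add_one_right_eq_Icc, Finset.sum_Ico_eq_sum_range,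
    Finset.mul_sum]
  refine Finset.sum_congr (by simp) fun k _ => ?_
  rw [← sub_div, add_comm 1 k]
  push_cast
  ring

theorem tendsto_rightRiemannSum {g : ℝ → ℝ} (hg : ContinuousOn g (Icc 0 1)) :
    Tendsto (rightRiemannSum g) atTop (𝓝 (∫ t in (0 : ℝ)..1, g t)) := by
  rw [Metric.tendsto_atTop]
  intro ε hε
  obtain ⟨δ, hδ, hgδ⟩ := Metric.uniformContinuousOn_iff.mp
    (isCompact_Icc.uniformContinuousOn_of_continuous hg) (ε / 2) (half_pos hε)
  obtain ⟨N, hN⟩ := exists_nat_gt (1 / δ)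
  refine ⟨N + 1, fun r hr => ?_⟩
  have hr0 : r ≠ 0 := by omega
  have hrpos : (0 : ℝ) < r := by positivity
  set x : ℕ → ℝ := fun k => (k : ℝ) / r with hx
  have hmesh : ∀ k, x (k + 1) - x k < δ := fun k => by
    rw [hx, ← sub_div, Nat.cast_succ, add_sub_cancel_left, div_lt_iff₀ hrpos, ← div_lt_iff₀' hδ]
    exact hN.trans_le (by exact_mod_cast (Nat.le_succ N).trans hr)
  have hmono : ∀ k, x k ≤ x (k + 1) := fun k => by simp only [hx]; gcongr; simp
  have hnodes : ∀ k ∈ Finset.range r, Icc (x k) (x (k + 1)) ⊆ Icc 0 1 := fun k hk =>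
    Icc_subset_Icc (by positivity)
      ((div_le_one hrpos).2 (by exact_mod_cast Finset.mem_range.1 hk))
  have hpiece : ∀ k ∈ Finset.range r,
      |(∫ t in (x k)..(x (k + 1)), g t) - (x (k + 1) - x k) * g (x (k + 1))|
        ≤ ε / 2 * (x (k + 1) - x k) := fun k hk =>
    abs_integral_sub_mul_le (hmono k)
      ((hg.mono (hnodes k hk)).intervalIntegrable_of_Icc (hmono k)) fun t ht => by
        rw [abs_sub_comm]
        refine (hgδ _ (hnodes k hk ⟨hmono k, le_rfl⟩) _ (hnodes k hk (Ioc_subset_Icc_self ht))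
          ?_).le
        rw [Real.dist_eq, abs_of_nonneg (by linarith [ht.2])]
        linarith [hmesh k, ht.1]
  rw [dist_comm, Real.dist_eq, rightRiemannSum_eq_sum_range,
    integral_zero_one_eq_sum_integral_div (hg.intervalIntegrable_of_Icc zero_le_one) hr0,
    ← Finset.sum_sub_distrib]
  calc _ ≤ ∑ k ∈ Finset.range r, ε / 2 * (x (k + 1) - x k) :=
        (Finset.abs_sum_le_sum_abs _ _).trans (Finset.sum_le_sum hpiece)
    _ = ε / 2 := by rw [← Finset.mul_sum, Finset.sum_range_sub, hx]; simp [hrpos.ne']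
    _ < ε := half_lt_self hε

lemma abs_rightRiemannSum_sub_le {f g : ℝ → ℝ} {C : ℝ}
    (hfg : ∀ t ∈ Icc (0 : ℝ) 1, |f t - g t| ≤ C) (r : ℕ) :
    |rightRiemannSum f r - rightRiemannSum g r| ≤ C := by
  rcases r.eq_zero_or_pos with rfl | hr
  · simpa [rightRiemannSum] using (abs_nonneg _).trans (hfg 0 (by simp))
  have hrpos : (0 : ℝ) < r := by exact_mod_cast hr
  rw [rightRiemannSum, rightRiemannSum, ← mul_sub, ← Finset.sum_sub_distrib, abs_mul,
    abs_of_pos (by positivity)]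
  calc 1 / (r : ℝ) * |∑ i ∈ Finset.Icc 1 r, (f (i / r) - g (i / r))|
      ≤ 1 / (r : ℝ) * ∑ _i ∈ Finset.Icc 1 r, C := by
        gcongr
        refine (Finset.abs_sum_le_sum_abs _ _).trans (Finset.sum_le_sum fun i hi => hfg _ ?_)
        exact ⟨by positivity, (div_le_one hrpos).2 (by exact_mod_cast (Finset.mem_Icc.1 hi).2)⟩
    _ = C := by simp [hrpos.ne']

lemma one_div_sq_mul_sum_mul_max_sub (h : ℝ → ℝ) (q : ℤ) (r : ℕ) :
    1 / (r : ℝ) ^ 2 * ∑ i ∈ Finset.Icc 1 r, h ((i : ℝ) / r) * ((max ((i : ℤ) - q) 0 : ℤ) : ℝ) =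
      rightRiemannSum (fun t => h t * max (t - q / r) 0) r := by
  rcases r.eq_zero_or_pos with rfl | hr
  · simp [rightRiemannSum]
  have hrpos : (0 : ℝ) < r := by exact_mod_cast hr
  rw [rightRiemannSum, Finset.mul_sum, Finset.mul_sum]
  refine Finset.sum_congr rfl fun i _ => ?_
  rw [← sub_div, ← zero_div (r : ℝ), max_div_div_right hrpos.le]
  push_cast
  field_simp

lemma integral_mul_max_sub_zero {h : ℝ → ℝ} {a b c : ℝ} (hac : a ≤ c) (hcb : c ≤ b)
    (hh : IntervalIntegrable h volume a b) :
    ∫ t in a..b, h t * max (t - c) 0 = ∫ t in c..b, h t * (t - c) := by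
  have hint : IntervalIntegrable (fun t => h t * max (t - c) 0) volume a b :=
    hh.mul_continuousOn (by fun_prop)
  have hab := hac.trans hcb
  rw [← integral_add_adjacent_intervals (b := c)
    (hint.mono_set (by rw [uIcc_of_le hac, uIcc_of_le hab]; exact Icc_subset_Icc le_rfl hcb))
    (hint.mono_set (by rw [uIcc_of_le hcb, uIcc_of_le hab]; exact Icc_subset_Icc hac le_rfl))]
  have hleft : EqOn (fun t => h t * max (t - c) 0) 0 (uIcc a c) := fun t ht => by
    rw [uIcc_of_le hac] at ht
    simp [max_eq_right (sub_nonpos.2 ht.2)]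
  have hright : EqOn (fun t => h t * max (t - c) 0) (fun t => h t * (t - c)) (uIcc c b) :=
    fun t ht => by
      rw [uIcc_of_le hcb] at ht
      simp [max_eq_left (sub_nonneg.2 ht.1)]
  rw [integral_congr hleft, integral_congr hright]
  simp

theorem stmt13 (h : ℝ → ℝ) (hcont : ContinuousOn h (Set.Icc 0 1))
    (p : ℕ → ℤ)
    (hplim : Filter.Tendsto (fun r : ℕ => (p r : ℝ) / r) Filter.atTop (nhds (1 / 2))) :
    Filter.Tendsto
      (fun r : ℕ =>
        (1 / (r : ℝ) ^ 2) *
          ∑ i ∈ Finset.Icc 1 r,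
            h ((i : ℝ) / r) * ((max ((i : ℤ) - p r - 1) 0 : ℤ) : ℝ))
      Filter.atTop (nhds (∫ t in (1 / 2 : ℝ)..1, h t * (t - 1 / 2))) := by
  set c : ℕ → ℝ := fun r => ((p r + 1 : ℤ) : ℝ) / r
  have hc : Tendsto c atTop (𝓝 (1 / 2)) := by
    simpa [c, add_div] using hplim.add tendsto_one_div_atTop_nhds_zero_nat
  obtain ⟨M, hM⟩ := isCompact_Icc.exists_bound_of_continuousOn hcont
  have hlimit : Tendsto (rightRiemannSum fun t => h t * max (t - 1 / 2) 0) atTop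
      (𝓝 (∫ t in (1 / 2 : ℝ)..1, h t * (t - 1 / 2))) := by
    rw [← integral_mul_max_sub_zero (a := 0) (by norm_num) (by norm_num)
      (hcont.intervalIntegrable_of_Icc zero_le_one)]
    exact tendsto_rightRiemannSum (hcont.mul (by fun_prop))
  have hshift : ∀ r, |rightRiemannSum (fun t => h t * max (t - c r) 0) r -
      rightRiemannSum (fun t => h t * max (t - 1 / 2) 0) r| ≤ M * |c r - 1 / 2| :=
    fun r => abs_rightRiemannSum_sub_le (fun t ht => by
      rw [← mul_sub, abs_mul]
      refine mul_le_mul (hM t ht) ?_ (abs_nonneg _) ((norm_nonneg _).trans (hM t ht))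
      exact (abs_max_sub_max_le_abs _ _ _).trans_eq
        (by rw [sub_sub_sub_cancel_left, abs_sub_comm])) r
  have hsmall : Tendsto (fun r => M * |c r - 1 / 2|) atTop (𝓝 0) := by
    simpa using ((hc.sub_const (1 / 2)).abs.const_mul M)
  have hsum := hlimit.add (squeeze_zero_norm hshift hsmall)
  rw [add_zero] at hsum
  refine hsum.congr fun r => ?_
  simp only [add_sub_cancel, sub_sub]
  exact (one_div_sq_mul_sum_mul_max_sub h (p r + 1) r).symm
end
end

section
/- Fix an integer g ≥ 0 and a real number a. For integers d > g and 0 ≤ p ≤ d−g, define k(d,p) = C(d−g, p) · ( −p·d/(d−g) + (d+1−g) − (d+1−g)/(p+1) ), where C(·,·) is the binomial coefficient. Let {p_d} be a sequence of integers with 0 ≤ p_d ≤ d−g and lim_{d→∞} (2·p_d − (d−g))/√(d−g) = a. Then lim_{d→∞} (1/2^{d−g}) · √(2π/(d−g)) · k(d, p_d) = e^{−a²/2}. -/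
/-!
With `n = q + m` and `t = (q - m) / n`, Stirling's formula gives
`C(n, q) ~ √(n / 2πqm) · n ^ n / (q ^ q m ^ m)`, and
`n ^ n / (2 ^ n q ^ q m ^ m) = exp (-n · klDivHalf t)` with `klDivHalf t = t² / 2 + O(t⁴)`.
When `(q - m) / √n → a` we have `n t² → a²` and `qm ~ n² / 4`, so
`√(πn/2) · C(n, q) / 2 ^ n → exp (-a² / 2)` (local de Moivre–Laplace). With `n = d - g`,
`q = p_d`, the remaining factor of `k(d, p_d)` is `~ n / 2`, which is exactly what turns
`√(2π/n)` into `√(πn/2)`.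
-/

open Filter Real

noncomputable section

/-- `k(d,p) = C(d−g,p)·(−p·d/(d−g) + (d+1−g) − (d+1−g)/(p+1))`, the Betti number
`k_{p,1}(X;L_d)` of a curve of genus `g` embedded by a divisor of degree `d`. -/
def kCurve (g d p : ℕ) : ℝ :=
  ((d - g).choose p : ℝ) *
    (-((p : ℝ) * d) / ((d : ℝ) - g) + ((d : ℝ) + 1 - g) - ((d : ℝ) + 1 - g) / ((p : ℝ) + 1))

open Asymptotics Topology

/-- The relative entropy of the Bernoulli law with parameter `(1 + t) / 2` with respect to the fair
coin. -/
def klDivHalf (t : ℝ) : ℝ := ((1 + t) * log (1 + t) + (1 - t) * log (1 - t)) / 2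

lemma abs_log_one_sub_add_le {t : ℝ} (ht : |t| ≤ 1 / 2) :
    |log (1 - t) + t + t ^ 2 / 2 + t ^ 3 / 3| ≤ 2 * t ^ 4 := by
  have h := abs_log_sub_add_sum_range_le (ht.trans_lt (by norm_num)) 3
  norm_num [Finset.sum_range_succ] at h
  calc |log (1 - t) + t + t ^ 2 / 2 + t ^ 3 / 3|
      = |t + t ^ 2 / 2 + t ^ 3 / 3 + log (1 - t)| := by ring_nf
    _ ≤ |t| ^ 4 / (1 - |t|) := h
    _ ≤ 2 * t ^ 4 := by
      rw [div_le_iff₀ (by linarith), (by decide : Even 4).pow_abs]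
      nlinarith [mul_nonneg (by positivity : (0 : ℝ) ≤ t ^ 4)
        (by linarith : (0 : ℝ) ≤ 1 - 2 * |t|)]

lemma abs_klDivHalf_sub_sq_le {t : ℝ} (ht : |t| ≤ 1 / 2) :
    |klDivHalf t - t ^ 2 / 2| ≤ 7 / 2 * t ^ 4 := by
  have hplus := abs_log_one_sub_add_le (t := -t) (by rwa [abs_neg])
  have hminus := abs_log_one_sub_add_le ht
  rw [sub_neg_eq_add, (by decide : Even 4).neg_pow] at hplus
  set E₁ := log (1 + t) + -t + (-t) ^ 2 / 2 + (-t) ^ 3 / 3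
  set E₂ := log (1 - t) + t + t ^ 2 / 2 + t ^ 3 / 3
  have hexpand :
      klDivHalf t - t ^ 2 / 2 = ((1 + t) * E₁ + (1 - t) * E₂ + 2 / 3 * t ^ 4) / 2 := by
    simp only [klDivHalf, E₁, E₂]; ring
  have h₁ : |1 + t| ≤ 3 / 2 := by rw [abs_le] at ht ⊢; constructor <;> linarith
  have h₂ : |1 - t| ≤ 3 / 2 := by rw [abs_le] at ht ⊢; constructor <;> linarith
  rw [hexpand, abs_div, abs_two, div_le_iff₀ two_pos]
  calc |(1 + t) * E₁ + (1 - t) * E₂ + 2 / 3 * t ^ 4|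
      ≤ |1 + t| * |E₁| + |1 - t| * |E₂| + 2 / 3 * t ^ 4 := by
        refine (abs_add_le _ _).trans (add_le_add ((abs_add_le _ _).trans ?_) ?_)
        · rw [abs_mul, abs_mul]
        · rw [abs_of_nonneg (by positivity)]
    _ ≤ 3 / 2 * (2 * t ^ 4) + 3 / 2 * (2 * t ^ 4) + 2 / 3 * t ^ 4 := by
        gcongr
    _ ≤ 7 / 2 * t ^ 4 * 2 := by nlinarith [pow_nonneg (sq_nonneg t) 2]

lemma add_pow_div_two_pow_mul_pow_mul_pow {q m : ℕ} (hq : q ≠ 0) (hm : m ≠ 0) :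
    ((q : ℝ) + m) ^ (q + m) / (2 ^ (q + m) * (q : ℝ) ^ q * (m : ℝ) ^ m) =
      exp (-((q + m) * klDivHalf ((q - m) / (q + m)))) := by
  have hn : (0 : ℝ) < q + m := by positivity
  have h₁ : 1 + ((q : ℝ) - m) / (q + m) = 2 * q / (q + m) := by field_simp; ring
  have h₂ : 1 - ((q : ℝ) - m) / (q + m) = 2 * m / (q + m) := by field_simp; ring
  have hlog : -((q + m) * klDivHalf ((q - m) / (q + m))) =
      q * log ((q + m) / (2 * q)) + m * log ((q + m) / (2 * m)) := by
    rw [klDivHalf, h₁, h₂]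
    simp only [log_div hn.ne' (by positivity : (2 * q : ℝ) ≠ 0),
      log_div hn.ne' (by positivity : (2 * m : ℝ) ≠ 0),
      log_div (by positivity : (2 * q : ℝ) ≠ 0) hn.ne',
      log_div (by positivity : (2 * m : ℝ) ≠ 0) hn.ne']
    field_simp
    ring
  rw [hlog, exp_add, exp_nat_mul, exp_nat_mul, exp_log (by positivity), exp_log (by positivity),
    div_pow, div_pow, mul_pow, mul_pow, pow_add, pow_add]
  field_simp

section

variable {ι : Type*} {l : Filter ι}

lemma tendsto_mul_klDivHalf {N x : ι → ℝ} {a : ℝ}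
    (hN : Tendsto N l atTop) (hx : Tendsto x l (𝓝 a)) :
    Tendsto (fun i => N i * klDivHalf (x i / √(N i))) l (𝓝 (a ^ 2 / 2)) := by
  have ht : Tendsto (fun i => x i / √(N i)) l (𝓝 0) :=
    hx.div_atTop (tendsto_sqrt_atTop.comp hN)
  have hsq : Tendsto (fun i => x i ^ 2 / 2) l (𝓝 (a ^ 2 / 2)) := (hx.pow 2).div_const 2
  have herr : Tendsto (fun i => 7 / 2 * x i ^ 4 / N i) l (𝓝 0) :=
    (tendsto_const_nhds.mul (hx.pow 4)).div_atTop hN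
  have hdiff : Tendsto (fun i => N i * klDivHalf (x i / √(N i)) - x i ^ 2 / 2) l (𝓝 0) := by
    refine squeeze_zero_norm' ?_ herr
    filter_upwards [ht.eventually (Metric.closedBall_mem_nhds 0 (by norm_num : (0:ℝ) < 1 / 2)),
      hN.eventually_gt_atTop 0] with i hti hNi
    rw [dist_zero_right, norm_eq_abs] at hti
    have hx2 : x i ^ 2 = N i * (x i / √(N i)) ^ 2 := by
      rw [div_pow, sq_sqrt hNi.le]; field_simp
    calc ‖N i * klDivHalf (x i / √(N i)) - x i ^ 2 / 2‖
        = N i * |klDivHalf (x i / √(N i)) - (x i / √(N i)) ^ 2 / 2| := by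
          rw [norm_eq_abs, hx2, ← abs_of_pos hNi, ← abs_mul, abs_of_pos hNi]; ring_nf
      _ ≤ N i * (7 / 2 * (x i / √(N i)) ^ 4) := by gcongr; exact abs_klDivHalf_sub_sq_le hti
      _ = 7 / 2 * x i ^ 4 / N i := by
          rw [div_pow, show 4 = 2 * 2 by rfl, pow_mul, pow_mul, sq_sqrt hNi.le]; field_simp
  simpa using hdiff.add hsq

lemma tendsto_sub_div_add {Q M : ι → ℝ} {a : ℝ} (hN : Tendsto (fun i => Q i + M i) l atTop)
    (hx : Tendsto (fun i => (Q i - M i) / √(Q i + M i)) l (𝓝 a)) :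
    Tendsto (fun i => (Q i - M i) / (Q i + M i)) l (𝓝 0) := by
  refine (hx.div_atTop (tendsto_sqrt_atTop.comp hN)).congr' ?_
  filter_upwards [hN.eventually_gt_atTop 0] with i hi
  rw [Function.comp_apply, div_div, mul_self_sqrt hi.le]

lemma tendsto_div_add {Q M : ι → ℝ} {a : ℝ} (hN : Tendsto (fun i => Q i + M i) l atTop)
    (hx : Tendsto (fun i => (Q i - M i) / √(Q i + M i)) l (𝓝 a)) :
    Tendsto (fun i => Q i / (Q i + M i)) l (𝓝 (1 / 2)) := by
  have h := ((tendsto_sub_div_add hN hx).const_add 1).div_const 2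
  rw [add_zero] at h
  refine h.congr' ?_
  filter_upwards [hN.eventually_gt_atTop 0] with i hi
  field_simp
  ring

lemma tendsto_atTop_of_tendsto_sub_div_sqrt {Q M : ι → ℝ} {a : ℝ}
    (hN : Tendsto (fun i => Q i + M i) l atTop)
    (hx : Tendsto (fun i => (Q i - M i) / √(Q i + M i)) l (𝓝 a)) : Tendsto Q l atTop := by
  refine (hN.atTop_mul_pos (by norm_num) (tendsto_div_add hN hx)).congr' ?_
  filter_upwards [hN.eventually_gt_atTop 0] with i hi
  field_simp

lemma isEquivalent_choose_add {q m : ι → ℕ} (hq : Tendsto q l atTop) (hm : Tendsto m l atTop) :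
    (fun i => ((q i + m i).choose (q i) : ℝ)) ~[l] fun i =>
      √((q i + m i) / (2 * π * q i * m i)) * (((q i : ℝ) + m i) ^ (q i + m i) /
        ((q i : ℝ) ^ q i * (m i : ℝ) ^ m i)) := by
  have hn : Tendsto (fun i => q i + m i) l atTop :=
    tendsto_atTop_mono (fun i => Nat.le_add_right _ _) hq
  have S := Stirling.factorial_isEquivalent_stirling
  refine (((S.comp_tendsto hn).div ((S.comp_tendsto hq).mul (S.comp_tendsto hm))).congr_left
    (Eventually.of_forall fun i => ?_)).congr_right ?_
  · simp [Nat.cast_choose ℝ (Nat.le_add_right (q i) (m i))]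
  filter_upwards [hq.eventually_gt_atTop 0, hm.eventually_gt_atTop 0] with i hqi hmi
  have hsqrt : √((q i + m i) / (2 * π * q i * m i)) =
      √(2 * (q i + m i) * π) / (√(2 * q i * π) * √(2 * m i * π)) := by
    rw [← sqrt_mul (by positivity), ← sqrt_div (by positivity)]
    congr 1
    field_simp
  simp only [Function.comp_apply, Pi.div_apply, Pi.mul_apply, Nat.cast_add, hsqrt, div_pow,
    pow_add]
  field_simp

theorem tendsto_sqrt_mul_choose_div_two_pow {q m : ι → ℕ} {a : ℝ}
    (hn : Tendsto (fun i => q i + m i) l atTop)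
    (hx : Tendsto (fun i => ((q i : ℝ) - m i) / √(q i + m i)) l (𝓝 a)) :
    Tendsto (fun i => √(π * (q i + m i) / 2) * (q i + m i).choose (q i) / 2 ^ (q i + m i)) l
      (𝓝 (exp (-a ^ 2 / 2))) := by
  have hN : Tendsto (fun i => (q i : ℝ) + m i) l atTop := by
    simpa only [Function.comp_def, Nat.cast_add] using
      (tendsto_natCast_atTop_atTop (R := ℝ)).comp hn
  have hN' : Tendsto (fun i => (m i : ℝ) + q i) l atTop := by simpa only [add_comm] using hN
  have hx' : Tendsto (fun i => ((m i : ℝ) - q i) / √(m i + q i)) l (𝓝 (-a)) :=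
    hx.neg.congr fun i => by rw [add_comm (m i : ℝ), ← neg_div, neg_sub]
  have hq : Tendsto q l atTop :=
    (tendsto_natCast_atTop_iff (R := ℝ)).mp (tendsto_atTop_of_tendsto_sub_div_sqrt hN hx)
  have hm : Tendsto m l atTop :=
    (tendsto_natCast_atTop_iff (R := ℝ)).mp (tendsto_atTop_of_tendsto_sub_div_sqrt hN' hx')
  have hqN := tendsto_div_add hN hx
  have hmN : Tendsto (fun i => (m i : ℝ) / (q i + m i)) l (𝓝 (1 / 2)) := by
    simpa only [add_comm (m _ : ℝ)] using tendsto_div_add hN' hx'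
  -- the two factors are `√(n² / 4qm)` and `n ^ n / (2 ^ n q ^ q m ^ m)`
  have hlim : Tendsto (fun i => √((2 * (q i / (q i + m i)) * (2 * (m i / (q i + m i))))⁻¹) *
      exp (-((q i + m i) * klDivHalf ((q i - m i) / √(q i + m i) / √(q i + m i))))) l
      (𝓝 (exp (-a ^ 2 / 2))) := by
    have h := ((((hqN.const_mul 2).mul (hmN.const_mul 2)).inv₀ (by norm_num)).sqrt).mul
      (tendsto_mul_klDivHalf hN hx).neg.rexp
    rwa [show √((2 * (1 / 2) * (2 * (1 / 2)))⁻¹) * exp (-(a ^ 2 / 2)) = exp (-a ^ 2 / 2) by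
      norm_num [neg_div]] at h
  have E := (IsEquivalent.refl (u := fun i => √(π * (q i + m i) / 2) / 2 ^ (q i + m i))).mul
    (isEquivalent_choose_add hq hm)
  refine ((E.congr_left (Eventually.of_forall fun i => ?_)).congr_right ?_).symm.tendsto_nhds hlim
  · simp only [Pi.mul_apply]
    ring
  filter_upwards [hq.eventually_gt_atTop 0, hm.eventually_gt_atTop 0] with i hqi hmi
  have hsqrt : √((2 * (q i / (q i + m i)) * (2 * (m i / (q i + m i))))⁻¹) =
      √(π * (q i + m i) / 2) * √((q i + m i) / (2 * π * q i * m i)) := by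
    rw [← sqrt_mul (by positivity)]
    congr 1
    field_simp
  rw [div_div, mul_self_sqrt (by positivity),
    ← add_pow_div_two_pow_mul_pow_mul_pow hqi.ne' hmi.ne', hsqrt, Pi.mul_apply]
  ring

lemma tendsto_two_div_mul_kCurve_factor {D P : ι → ℝ} {c : ℝ} (hD : Tendsto D l atTop)
    (hP : Tendsto P l atTop) (hPD : Tendsto (fun i => P i / (D i - c)) l (𝓝 (1 / 2))) :
    Tendsto (fun i => 2 / (D i - c) *
      (-(P i * D i) / (D i - c) + (D i + 1 - c) - (D i + 1 - c) / (P i + 1))) l (𝓝 1) := by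
  have hN : Tendsto (fun i => D i - c) l atTop := by
    simpa only [sub_eq_add_neg] using tendsto_atTop_add_const_right _ (-c) hD
  have hN₀ := hN.inv_tendsto_atTop
  have hP₀ := (tendsto_atTop_add_const_right _ 1 hP).inv_tendsto_atTop
  have h := (((hPD.const_mul (-2)).mul ((hN₀.const_mul c).const_add 1)).add
    ((hN₀.const_add 1).const_mul 2)).sub (((hN₀.const_add 1).const_mul 2).mul hP₀)
  rw [show -2 * (1 / 2) * (1 + c * 0) + 2 * (1 + 0) - 2 * (1 + 0) * 0 = (1 : ℝ) by norm_num] at h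
  refine h.congr' ?_
  filter_upwards [hN.eventually_gt_atTop 0, hP.eventually_gt_atTop 0] with i hi hPi
  simp only [Pi.inv_apply]
  field_simp
  ring

end

lemma sqrt_two_mul_pi_div {x : ℝ} (hx : 0 < x) : √(2 * π / x) = √(π * x / 2) * (2 / x) := by
  rw [← sqrt_sq (by positivity : 0 ≤ 2 / x), ← sqrt_mul (by positivity)]
  congr 1
  field_simp

theorem stmt14 (g : ℕ) (a : ℝ) (p : ℕ → ℕ)
    (hp : ∀ d, p d ≤ d - g)
    (hplim : Filter.Tendsto
      (fun d : ℕ => ((2 * p d : ℝ) - ((d : ℝ) - g)) / Real.sqrt ((d : ℝ) - g))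
      Filter.atTop (nhds a)) :
    Filter.Tendsto
      (fun d : ℕ =>
        (1 / (2 : ℝ) ^ (d - g)) * Real.sqrt (2 * π / ((d : ℝ) - g)) * kCurve g d (p d))
      Filter.atTop (nhds (Real.exp (-a ^ 2 / 2))) := by
  obtain ⟨m, hm⟩ : ∃ m : ℕ → ℕ, ∀ d, p d + m d = d - g :=
    ⟨fun d => d - g - p d, fun d => Nat.add_sub_cancel' (hp d)⟩
  have hcast : ∀ᶠ d : ℕ in atTop, (d : ℝ) - g = p d + m d := by
    filter_upwards [eventually_ge_atTop g] with d hd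
    rw [← Nat.cast_sub hd, ← hm, Nat.cast_add]
  have hn : Tendsto (fun d => p d + m d) atTop atTop := by
    simpa only [hm] using tendsto_sub_atTop_nat g
  have hN : Tendsto (fun d => (p d : ℝ) + m d) atTop atTop := by
    simpa only [Function.comp_def, Nat.cast_add] using
      (tendsto_natCast_atTop_atTop (R := ℝ)).comp hn
  have hx : Tendsto (fun d => ((p d : ℝ) - m d) / √(p d + m d)) atTop (𝓝 a) := by
    refine hplim.congr' ?_
    filter_upwards [hcast] with d hd
    rw [hd]
    ring
  have hpd : Tendsto (fun d => (p d : ℝ) / ((d : ℝ) - g)) atTop (𝓝 (1 / 2)) := by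
    refine (tendsto_div_add hN hx).congr' ?_
    filter_upwards [hcast] with d hd
    rw [hd]
  have hF := tendsto_two_div_mul_kCurve_factor tendsto_natCast_atTop_atTop
    (tendsto_atTop_of_tendsto_sub_div_sqrt hN hx) hpd
  rw [← mul_one (exp _)]
  refine ((tendsto_sqrt_mul_choose_div_two_pow hn hx).mul hF).congr' ?_
  filter_upwards [hcast, hN.eventually_gt_atTop 0] with d hd hpos
  rw [kCurve, ← hm, hd, sqrt_two_mul_pi_div hpos]
  ring
end
end
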